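/- arXiv:2311.04790 — 2 statements merged into one kernel-verified Lean document; each statement's English description precedes it below -/
import Mathlib

section
/- Under the stated hypotheses, for every 𝗑 ∈ X the map ω ↦ L_ω*(J_{A_ω}(L_ω 𝗑)) is Bochner μ-integrable, the operator X → X : 𝗑 ↦ ∫_Ω L_ω*(J_{A_ω}(L_ω 𝗑)) μ(dω) is firmly nonexpansive, and it equals the resolvent J_W = (Id_X + W)⁻¹ of the integral resolvent mixture W = rmi(L_ω, A_ω)_{ω∈Ω}. -/
open MeasureTheory
open scoped ENNReal NNReal

/-- A set-valued operator `A : H → Set H` (identified with its graph) is monotone if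
`⟪x − y, u − v⟫ ≥ 0` whenever `u ∈ A x` and `v ∈ A y`. -/
def IsMonotoneOp {H : Type*} [NormedAddCommGroup H] [InnerProductSpace ℝ H]
    (A : H → Set H) : Prop :=
  ∀ ⦃x u y v : H⦄, u ∈ A x → v ∈ A y → (0 : ℝ) ≤ inner ℝ (x - y) (u - v)

/-- `A` is maximally monotone: it is monotone and its graph is not properly contained in the
graph of any monotone operator. -/
def IsMaxMonotone {H : Type*} [NormedAddCommGroup H] [InnerProductSpace ℝ H]
    (A : H → Set H) : Prop :=
  IsMonotoneOp A ∧ ∀ B : H → Set H, IsMonotoneOp B → (∀ x, A x ⊆ B x) → ∀ x, B x ⊆ A x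

/-- The inverse operator `A⁻¹`, whose graph is `{(u, x) : (x, u) ∈ gra A}`. -/
def graphInv {H : Type*} (A : H → Set H) : H → Set H := fun u => {x | u ∈ A x}

/-- `J` is the resolvent `(Id + A)⁻¹` of `A` (as a single-valued, everywhere-defined map):
`J x = y ↔ x − y ∈ A y`. -/
def IsResolventOf {H : Type*} [AddCommGroup H] (A : H → Set H) (J : H → H) : Prop :=
  ∀ x y, J x = y ↔ x - y ∈ A y

/-- For a single-valued map `R : X → X`, `rmiOp R = R⁻¹ − Id` as a set-valued operator:
`u ∈ (R⁻¹ − Id)(x) ↔ R (x + u) = x`. -/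
def rmiOp {X : Type*} [AddCommGroup X] (R : X → X) : X → Set X :=
  fun x => {u | R (x + u) = x}

/-!
Resolvents of monotone operators are firmly nonexpansive. Comparing `J_{A_ω}(L_ω ξ)` with the
square-integrable selection `x(ω) = J_{A_ω}(x(ω) + x*(ω))` dominates the integrand by an
integrable function, and its measurability follows from that of the scalar products
`⟪J_{A_ω}(L_ω ξ), L_ω η⟫` by Pettis' theorem, `X` being separable.

For `d(ω) = J_{A_ω}(L_ω ξ) − J_{A_ω}(L_ω η)` and `Δ = Rξ − Rη`, firm nonexpansiveness of each
`J_{A_ω}` gives `∫ ‖d‖² ≤ ⟪ξ − η, Δ⟫`, while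
`‖Δ‖² = ∫ ⟪L_ω Δ, d(ω)⟫ ≤ (‖Δ‖² ∫ ‖L_ω‖² + ∫ ‖d‖²) / 2` together with `∫ ‖L_ω‖² ≤ 1` gives
`‖Δ‖² ≤ ∫ ‖d‖²`. That `R` is the resolvent of `R⁻¹ − Id` is a tautology.
-/

open Filter

def FirmlyNonexpansive {E : Type*} [NormedAddCommGroup E] [InnerProductSpace ℝ E]
    (T : E → E) : Prop :=
  ∀ a b, ‖T a - T b‖ ^ 2 ≤ inner ℝ (a - b) (T a - T b)

section Operators

variable {E : Type*} [NormedAddCommGroup E] [InnerProductSpace ℝ E]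

theorem FirmlyNonexpansive.lipschitzWith {T : E → E} (hT : FirmlyNonexpansive T) :
    LipschitzWith 1 T := by
  refine LipschitzWith.of_dist_le_mul fun a b => ?_
  rw [dist_eq_norm, dist_eq_norm, NNReal.coe_one, one_mul]
  have hfirm := (hT a b).trans (real_inner_le_norm _ _)
  rcases (norm_nonneg (T a - T b)).eq_or_lt with h | h
  · rw [← h]; exact norm_nonneg _
  · nlinarith

theorem IsMonotoneOp.firmlyNonexpansive {A : E → Set E} {J : E → E} (hA : IsMonotoneOp A)
    (hJ : IsResolventOf A J) : FirmlyNonexpansive J := by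
  intro a b
  have hmono := hA ((hJ a (J a)).1 rfl) ((hJ b (J b)).1 rfl)
  rw [show a - J a - (b - J b) = (a - b) - (J a - J b) by abel, inner_sub_right,
    real_inner_self_eq_norm_sq, real_inner_comm] at hmono
  linarith

end Operators

section Resolvents

variable {E : Type*} [AddCommGroup E]

theorem IsResolventOf.apply_add_eq {A : E → Set E} {J : E → E} (hJ : IsResolventOf A J)
    {x u : E} (hu : u ∈ A x) : J (x + u) = x :=
  (hJ _ _).2 (by rwa [add_sub_cancel_left])

theorem isResolventOf_rmiOp (R : E → E) : IsResolventOf (rmiOp R) R := fun x y => by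
  show R x = y ↔ R (y + (x - y)) = y
  rw [add_sub_cancel]

end Resolvents

theorem DenseRange.norm_sq_eq_iSup_inner {E : Type*} [NormedAddCommGroup E]
    [InnerProductSpace ℝ E] {D : ℕ → E} (hD : DenseRange D) (w : E) :
    ‖w‖ ^ 2 = ⨆ n, 2 * inner ℝ w (D n) - ‖D n‖ ^ 2 := by
  have hgap : ∀ n, ‖w‖ ^ 2 - (2 * inner ℝ w (D n) - ‖D n‖ ^ 2) = ‖w - D n‖ ^ 2 := fun n => by
    rw [norm_sub_sq_real]; ring
  have hle : ∀ n, 2 * inner ℝ w (D n) - ‖D n‖ ^ 2 ≤ ‖w‖ ^ 2 := fun n => by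
    nlinarith [hgap n, sq_nonneg ‖w - D n‖]
  refine le_antisymm (le_of_forall_pos_le_add fun ε hε => ?_) (ciSup_le hle)
  obtain ⟨n, hn⟩ := hD.exists_dist_lt w (Real.sqrt_pos.2 hε)
  rw [dist_eq_norm] at hn
  have hclose : ‖w - D n‖ ^ 2 < ε := by
    nlinarith [norm_nonneg (w - D n), Real.sq_sqrt hε.le, Real.sqrt_nonneg ε]
  have := le_ciSup ⟨‖w‖ ^ 2, Set.forall_mem_range.2 hle⟩ n
  linarith [hgap n]

theorem measurable_of_forall_measurable_dist {Ω E : Type*} [MeasurableSpace Ω] [MetricSpace E]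
    [SecondCountableTopology E] [CompleteSpace E] [MeasurableSpace E] [BorelSpace E]
    {g : Ω → E} (h : ∀ c, Measurable fun ω => dist (g ω) c) : Measurable g := by
  cases isEmpty_or_nonempty E
  · exact measurable_of_empty_codomain g
  obtain ⟨D, hD⟩ := TopologicalSpace.exists_dense_seq E
  let e : E → ℕ → ℝ := fun x n => dist x (D n)
  have he_inj : Function.Injective e := by
    intro a b hab
    refine dist_le_zero.1 (le_of_forall_pos_le_add fun ε hε => ?_)
    obtain ⟨n, hn⟩ := hD.exists_dist_lt a (half_pos hε)
    have hdist : dist a (D n) = dist b (D n) := congrFun hab n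
    linarith [dist_triangle_right a b (D n)]
  have he : MeasurableEmbedding e :=
    (continuous_pi fun n => continuous_id.dist continuous_const).measurableEmbedding he_inj
  exact he.measurable_comp_iff.1 (measurable_pi_iff.2 fun n => h (D n))

/-- Pettis' measurability theorem in a separable Hilbert space. -/
theorem stronglyMeasurable_of_forall_measurable_inner {Ω E : Type*} [MeasurableSpace Ω]
    [NormedAddCommGroup E] [InnerProductSpace ℝ E] [CompleteSpace E]
    [SecondCountableTopology E] {g : Ω → E} (h : ∀ ξ, Measurable fun ω => inner ℝ (g ω) ξ) :
    StronglyMeasurable g := by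
  borelize E
  obtain ⟨D, hD⟩ := TopologicalSpace.exists_dense_seq E
  refine (measurable_of_forall_measurable_dist fun c => ?_).stronglyMeasurable
  have hsq : Measurable fun ω => ‖g ω - c‖ ^ 2 := by
    simp_rw [fun ω => hD.norm_sq_eq_iSup_inner (g ω - c), inner_sub_left]
    exact Measurable.iSup fun n => (((h (D n)).sub_const _).const_mul 2).sub_const _
  have hdist : (fun ω => dist (g ω) c) = fun ω => √(‖g ω - c‖ ^ 2) :=
    funext fun ω => by rw [Real.sqrt_sq (norm_nonneg _), dist_eq_norm]
  exact hdist ▸ hsq.sqrt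

theorem memLp_two_of_lintegral_nnnorm_sq_lt_top {Ω E : Type*} [MeasurableSpace Ω]
    {μ : Measure Ω} [NormedAddCommGroup E] {f : Ω → E} (hf : AEStronglyMeasurable f μ)
    (h : ∫⁻ ω, (‖f ω‖₊ : ℝ≥0∞) ^ 2 ∂μ < ⊤) : MemLp f 2 μ :=
  ⟨hf, by simpa [eLpNorm_lt_top_iff_lintegral_rpow_enorm_lt_top, enorm_eq_nnnorm] using h⟩

section IntegralAdjoint

variable {Ω X H : Type*} [MeasurableSpace Ω] {μ : Measure Ω}
  [NormedAddCommGroup X] [InnerProductSpace ℝ X] [CompleteSpace X]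
  [NormedAddCommGroup H] [InnerProductSpace ℝ H] [CompleteSpace H]
  {L : Ω → X →L[ℝ] H} {T : Ω → H → H}

theorem norm_adjoint_apply_le (A : X →L[ℝ] H) (v : H) : ‖A.adjoint v‖ ≤ ‖A‖ * ‖v‖ := by
  simpa only [LinearIsometryEquiv.norm_map] using A.adjoint.le_opNorm v

theorem integrable_adjoint_apply_comp (hT : ∀ ω, LipschitzWith 1 (T ω)) {p : Ω → H}
    (hp : MemLp p 2 μ) (hTp : MemLp (fun ω => T ω (p ω)) 2 μ)
    (hL : Integrable (fun ω => ‖L ω‖ ^ 2) μ) (ξ : X)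
    (hmeas : AEStronglyMeasurable (fun ω => (L ω).adjoint (T ω (L ω ξ))) μ) :
    Integrable (fun ω => (L ω).adjoint (T ω (L ω ξ))) μ := by
  have hbound : Integrable (fun ω =>
      ‖ξ‖ * ‖L ω‖ ^ 2 + ‖L ω‖ ^ 2 + ‖p ω‖ ^ 2 / 2 + ‖T ω (p ω)‖ ^ 2 / 2) μ :=
    (((hL.const_mul _).add hL).add ((hp.integrable_norm_pow two_ne_zero).div_const _)).add
      ((hTp.integrable_norm_pow two_ne_zero).div_const _)
  refine hbound.mono' hmeas (Eventually.of_forall fun ω => ?_)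
  have hLξ : ‖L ω ξ‖ ≤ ‖L ω‖ * ‖ξ‖ := (L ω).le_opNorm ξ
  have hlip : ‖T ω (L ω ξ) - T ω (p ω)‖ ≤ ‖L ω ξ - p ω‖ := by
    simpa using (hT ω).norm_sub_le (L ω ξ) (p ω)
  have hJ : ‖T ω (L ω ξ)‖ ≤ ‖L ω‖ * ‖ξ‖ + ‖p ω‖ + ‖T ω (p ω)‖ := by
    linarith [norm_le_norm_sub_add (T ω (L ω ξ)) (T ω (p ω)), norm_sub_le (L ω ξ) (p ω)]
  have hmul := mul_le_mul_of_nonneg_left hJ (norm_nonneg (L ω))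
  nlinarith [norm_adjoint_apply_le (L ω) (T ω (L ω ξ)), norm_nonneg (L ω), norm_nonneg ξ,
    sq_nonneg (2 * ‖L ω‖ - ‖p ω‖ - ‖T ω (p ω)‖), sq_nonneg (‖p ω‖ - ‖T ω (p ω)‖)]

theorem firmlyNonexpansive_integral_adjoint_comp (hT : ∀ ω, FirmlyNonexpansive (T ω))
    (hmeas : ∀ ξ, AEStronglyMeasurable (fun ω => T ω (L ω ξ)) μ)
    (hint : ∀ ξ, Integrable (fun ω => (L ω).adjoint (T ω (L ω ξ))) μ)
    (hL : Integrable (fun ω => ‖L ω‖ ^ 2) μ) (hL1 : ∫ ω, ‖L ω‖ ^ 2 ∂μ ≤ 1) :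
    FirmlyNonexpansive fun ξ => ∫ ω, (L ω).adjoint (T ω (L ω ξ)) ∂μ := by
  intro ξ η
  set d : Ω → H := fun ω => T ω (L ω ξ) - T ω (L ω η)
  set Δ := (∫ ω, (L ω).adjoint (T ω (L ω ξ)) ∂μ) - ∫ ω, (L ω).adjoint (T ω (L ω η)) ∂μ
  have hLd_eq : (fun ω => (L ω).adjoint (d ω)) =
      (fun ω => (L ω).adjoint (T ω (L ω ξ))) - fun ω => (L ω).adjoint (T ω (L ω η)) :=
    funext fun ω => map_sub _ _ _
  have hLd : Integrable (fun ω => (L ω).adjoint (d ω)) μ := hLd_eq ▸ (hint ξ).sub (hint η)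
  have hΔ : Δ = ∫ ω, (L ω).adjoint (d ω) ∂μ := by
    rw [hLd_eq, integral_sub' (hint ξ) (hint η)]
  have hinner : ∀ v, inner ℝ v Δ = ∫ ω, inner ℝ (L ω v) (d ω) ∂μ := fun v => by
    simp only [hΔ, ← integral_inner hLd, ContinuousLinearMap.adjoint_inner_right]
  have hinner_int : ∀ v, Integrable (fun ω => inner ℝ (L ω v) (d ω)) μ := fun v => by
    simpa only [ContinuousLinearMap.adjoint_inner_right] using hLd.const_inner (𝕜 := ℝ) v
  have hd : ∀ ω, ‖d ω‖ ≤ ‖L ω‖ * ‖ξ - η‖ := fun ω =>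
    calc ‖d ω‖ ≤ ‖L ω ξ - L ω η‖ := by
          simpa using (hT ω).lipschitzWith.norm_sub_le (L ω ξ) (L ω η)
      _ = ‖L ω (ξ - η)‖ := by rw [map_sub]
      _ ≤ ‖L ω‖ * ‖ξ - η‖ := (L ω).le_opNorm _
  have hd_meas : AEStronglyMeasurable d μ := (hmeas ξ).sub (hmeas η)
  have hd_int : Integrable (fun ω => ‖d ω‖ ^ 2) μ := by
    refine (hL.mul_const (‖ξ - η‖ ^ 2)).mono' (hd_meas.norm.pow 2)
      (Eventually.of_forall fun ω => ?_)
    rw [Real.norm_of_nonneg (sq_nonneg _), ← mul_pow]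
    exact pow_le_pow_left₀ (norm_nonneg _) (hd ω) 2
  have hd_le_inner : ∫ ω, ‖d ω‖ ^ 2 ∂μ ≤ inner ℝ (ξ - η) Δ := by
    rw [hinner]
    refine integral_mono hd_int (hinner_int _) fun ω => ?_
    simpa only [map_sub] using hT ω (L ω ξ) (L ω η)
  have hΔ_le : ‖Δ‖ ^ 2 ≤ (‖Δ‖ ^ 2 * ∫ ω, ‖L ω‖ ^ 2 ∂μ + ∫ ω, ‖d ω‖ ^ 2 ∂μ) / 2 :=
    calc ‖Δ‖ ^ 2 = ∫ ω, inner ℝ (L ω Δ) (d ω) ∂μ := by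
          rw [← real_inner_self_eq_norm_sq, hinner]
      _ ≤ ∫ ω, (‖Δ‖ ^ 2 * ‖L ω‖ ^ 2 + ‖d ω‖ ^ 2) / 2 ∂μ := by
          refine integral_mono (hinner_int _) (((hL.const_mul _).add hd_int).div_const _)
            fun ω => ?_
          have hLΔ : ‖L ω Δ‖ ≤ ‖L ω‖ * ‖Δ‖ := (L ω).le_opNorm Δ
          nlinarith [real_inner_le_norm (L ω Δ) (d ω), sq_nonneg (‖L ω Δ‖ - ‖d ω‖),
            norm_nonneg (L ω Δ), norm_nonneg (d ω)]
      _ = _ := by rw [integral_div, integral_add (hL.const_mul _) hd_int, integral_const_mul]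
  nlinarith [sq_nonneg ‖Δ‖]

end IntegralAdjoint

theorem stmt_4_general
    {Ω : Type*} [MeasurableSpace Ω] {μ : Measure Ω}
    {X : Type*} [NormedAddCommGroup X] [InnerProductSpace ℝ X] [CompleteSpace X]
    [SecondCountableTopology X]
    {H : Type*} [NormedAddCommGroup H] [InnerProductSpace ℝ H] [CompleteSpace H]
    [SecondCountableTopology H] [MeasurableSpace H] [BorelSpace H]
    -- the family of maximally monotone operators, with its resolvents `JA ω = J_{A_ω}`
    (A : Ω → H → Set H) (JA : Ω → H → H)
    (hAmax : ∀ ω, IsMaxMonotone (A ω))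
    (hJA : ∀ ω, IsResolventOf (A ω) (JA ω))
    (hJAmeas : ∀ x : Ω → H, Measurable x → Measurable fun ω => JA ω (x ω))
    (hdom : ∃ x xs : Ω → H, Measurable x ∧ Measurable xs ∧
      (∫⁻ ω, (‖x ω‖₊ : ℝ≥0∞) ^ 2 ∂μ) < ⊤ ∧ (∫⁻ ω, (‖xs ω‖₊ : ℝ≥0∞) ^ 2 ∂μ) < ⊤ ∧
      ∀ᵐ ω ∂μ, xs ω ∈ A ω (x ω))
    -- the family of bounded linear operators
    (L : Ω → X →L[ℝ] H)
    (hLmeas : ∀ ξ : X, Measurable fun ω => L ω ξ)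
    (hLint : Integrable (fun ω => ‖L ω‖ ^ 2) μ)
    (hL1 : (∫ ω, ‖L ω‖ ^ 2 ∂μ) ≤ 1)
    :
    (∀ ξ : X, Integrable (fun ω => (L ω).adjoint (JA ω (L ω ξ))) μ) ∧
    (∀ ξ η : X,
      ‖(∫ ω, (L ω).adjoint (JA ω (L ω ξ)) ∂μ) - ∫ ω, (L ω).adjoint (JA ω (L ω η)) ∂μ‖ ^ 2 ≤
        inner ℝ (ξ - η)
          ((∫ ω, (L ω).adjoint (JA ω (L ω ξ)) ∂μ) - ∫ ω, (L ω).adjoint (JA ω (L ω η)) ∂μ)) ∧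
    IsResolventOf (rmiOp fun ξ : X => ∫ ω, (L ω).adjoint (JA ω (L ω ξ)) ∂μ)
      (fun ξ : X => ∫ ω, (L ω).adjoint (JA ω (L ω ξ)) ∂μ) := by
  obtain ⟨x, xs, hx, hxs, hx2, hxs2, hmem⟩ := hdom
  have hfirm : ∀ ω, FirmlyNonexpansive (JA ω) := fun ω => (hAmax ω).1.firmlyNonexpansive (hJA ω)
  have hJL : ∀ ξ, Measurable fun ω => JA ω (L ω ξ) := fun ξ => hJAmeas _ (hLmeas ξ)
  have hmeas : ∀ ξ, AEStronglyMeasurable (fun ω => (L ω).adjoint (JA ω (L ω ξ))) μ :=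
    fun ξ => (stronglyMeasurable_of_forall_measurable_inner fun η => by
      simpa only [ContinuousLinearMap.adjoint_inner_left] using
        (hJL ξ).inner (hLmeas η)).aestronglyMeasurable
  have hxL2 := memLp_two_of_lintegral_nnnorm_sq_lt_top hx.aestronglyMeasurable hx2
  have hxsL2 := memLp_two_of_lintegral_nnnorm_sq_lt_top hxs.aestronglyMeasurable hxs2
  have hint : ∀ ξ, Integrable (fun ω => (L ω).adjoint (JA ω (L ω ξ))) μ := fun ξ =>
    integrable_adjoint_apply_comp (fun ω => (hfirm ω).lipschitzWith) (hxL2.add hxsL2)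
      (hxL2.ae_eq (by filter_upwards [hmem] with ω hω using ((hJA ω).apply_add_eq hω).symm))
      hLint ξ (hmeas ξ)
  exact ⟨hint, firmlyNonexpansive_integral_adjoint_comp hfirm
    (fun ξ => (hJL ξ).aestronglyMeasurable) hint hLint hL1, isResolventOf_rmiOp _⟩

/-- Theorem 3.5(v): for every `ξ ∈ X` the map `ω ↦ L_ω*(J_{A_ω}(L_ω ξ))` is
Bochner `μ`-integrable, the operator `R : ξ ↦ ∫ L_ω*(J_{A_ω}(L_ω ξ)) dμ` is firmly
nonexpansive, and `R` is the resolvent `J_W = (Id + W)⁻¹` of `W = rmi(L_ω, A_ω)`. -/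
theorem stmt_4
    {Ω : Type*} [MeasurableSpace Ω] {μ : Measure Ω} [SigmaFinite μ] [μ.IsComplete]
    {X : Type*} [NormedAddCommGroup X] [InnerProductSpace ℝ X] [CompleteSpace X]
    [SecondCountableTopology X] [MeasurableSpace X] [BorelSpace X]
    {H : Type*} [NormedAddCommGroup H] [InnerProductSpace ℝ H] [CompleteSpace H]
    [SecondCountableTopology H] [MeasurableSpace H] [BorelSpace H]
    -- the family of maximally monotone operators, with its resolvents `JA ω = J_{A_ω}`
    -- and the resolvents `JAinv ω = J_{A_ω⁻¹}` of the inverses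
    (A : Ω → H → Set H) (JA JAinv : Ω → H → H)
    (hAmax : ∀ ω, IsMaxMonotone (A ω))
    (hJA : ∀ ω, IsResolventOf (A ω) (JA ω))
    (hJAinv : ∀ ω, IsResolventOf (graphInv (A ω)) (JAinv ω))
    (hJAmeas : ∀ x : Ω → H, Measurable x → Measurable fun ω => JA ω (x ω))
    (hdom : ∃ x xs : Ω → H, Measurable x ∧ Measurable xs ∧
      (∫⁻ ω, (‖x ω‖₊ : ℝ≥0∞) ^ 2 ∂μ) < ⊤ ∧ (∫⁻ ω, (‖xs ω‖₊ : ℝ≥0∞) ^ 2 ∂μ) < ⊤ ∧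
      ∀ᵐ ω ∂μ, xs ω ∈ A ω (x ω))
    -- the family of bounded linear operators
    (L : Ω → X →L[ℝ] H)
    (hLmeas : ∀ ξ : X, Measurable fun ω => L ω ξ)
    (hLint : Integrable (fun ω => ‖L ω‖ ^ 2) μ)
    (hL0 : 0 < ∫ ω, ‖L ω‖ ^ 2 ∂μ) (hL1 : (∫ ω, ‖L ω‖ ^ 2 ∂μ) ≤ 1)
    :
    (∀ ξ : X, Integrable (fun ω => (L ω).adjoint (JA ω (L ω ξ))) μ) ∧
    (∀ ξ η : X,
      ‖(∫ ω, (L ω).adjoint (JA ω (L ω ξ)) ∂μ) - ∫ ω, (L ω).adjoint (JA ω (L ω η)) ∂μ‖ ^ 2 ≤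
        inner ℝ (ξ - η)
          ((∫ ω, (L ω).adjoint (JA ω (L ω ξ)) ∂μ) - ∫ ω, (L ω).adjoint (JA ω (L ω η)) ∂μ)) ∧
    IsResolventOf (rmiOp fun ξ : X => ∫ ω, (L ω).adjoint (JA ω (L ω ξ)) ∂μ)
      (fun ξ : X => ∫ ω, (L ω).adjoint (JA ω (L ω ξ)) ∂μ) :=
  stmt_4_general A JA hAmax hJA hJAmeas hdom L hLmeas hLint hL1
end

section
/- Under the stated hypotheses, suppose in addition that μ is a probability measure and that every L_ω is an isometry (‖L_ω 𝗑‖ = ‖𝗑‖ for all 𝗑 ∈ X). Then the integral resolvent mixture and comixture coincide: rmi(L_ω, A_ω)_{ω∈Ω} = rcm(L_ω, A_ω)_{ω∈Ω}. -/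
/-!
Write `R = ∫ L_ω† ∘ J_{A_ω} ∘ L_ω` and `R' = ∫ L_ω† ∘ J_{A_ω⁻¹} ∘ L_ω`, so that the mixture is
`R⁻¹ - Id` and the comixture is `(R'⁻¹ - Id)⁻¹`. Since `J_{A⁻¹} = Id - J_A`, `L_ω† ∘ L_ω = Id` for
an isometry and `μ(Ω) = 1`, we get `R' = Id - R`; and `R⁻¹ - Id = ((Id - R)⁻¹ - Id)⁻¹` holds for
every map `R`. The only analytic point is that the integrand of `R` is Bochner integrable, which
follows from nonexpansiveness of `J_{A_ω}` and the square-integrable selection of `gra A_ω`.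
-/

open MeasureTheory
open scoped ENNReal NNReal

lemma rmiOp_eq_graphInv_rmiOp_sub {X : Type*} [AddCommGroup X] (R : X → X) :
    rmiOp R = graphInv (rmiOp fun ξ => ξ - R ξ) := by
  funext ξ
  ext u
  simp only [rmiOp, graphInv, Set.mem_ofPred_eq, add_comm u ξ, sub_eq_iff_eq_add]
  constructor
  · intro h
    rw [h, add_comm]
  · intro h
    exact add_right_cancel (h.trans (add_comm _ _)).symm

namespace IsResolventOf

variable {H : Type*}

section AddCommGroup

variable [AddCommGroup H] {A : H → Set H} {J : H → H}

lemma sub_apply_mem (hJ : IsResolventOf A J) (x : H) : x - J x ∈ A (J x) :=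
  (hJ x (J x)).mp rfl

lemma apply_add_of_mem (hJ : IsResolventOf A J) {x u : H} (h : u ∈ A x) : J (x + u) = x :=
  (hJ _ _).mpr (by rwa [add_sub_cancel_left])

lemma graphInv_apply (hJ : IsResolventOf A J) {J' : H → H}
    (hJ' : IsResolventOf (graphInv A) J') (y : H) : J' y = y - J y :=
  (hJ' y _).mpr (by simpa [graphInv, sub_sub_cancel] using hJ.sub_apply_mem y)

end AddCommGroup

variable [NormedAddCommGroup H] [InnerProductSpace ℝ H] {A : H → Set H} {J : H → H}

lemma norm_sub_le (hA : IsMonotoneOp A) (hJ : IsResolventOf A J) (a c : H) :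
    ‖J a - J c‖ ≤ ‖a - c‖ := by
  have hmono := hA (hJ.sub_apply_mem a) (hJ.sub_apply_mem c)
  rw [show a - J a - (c - J c) = (a - c) - (J a - J c) by abel, inner_sub_right,
    real_inner_self_eq_norm_sq] at hmono
  nlinarith [real_inner_le_norm (J a - J c) (a - c), norm_nonneg (J a - J c),
    norm_nonneg (a - c)]

lemma norm_apply_le (hA : IsMonotoneOp A) (hJ : IsResolventOf A J) {x u : H} (h : u ∈ A x)
    (y : H) : ‖J y‖ ≤ ‖y‖ + (‖x‖ + ‖u‖) + ‖x‖ :=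
  calc ‖J y‖ = ‖(J y - J (x + u)) + x‖ := by rw [hJ.apply_add_of_mem h, sub_add_cancel]
    _ ≤ ‖y - (x + u)‖ + ‖x‖ := norm_add_le_of_le (hJ.norm_sub_le hA _ _) le_rfl
    _ ≤ ‖y‖ + (‖x‖ + ‖u‖) + ‖x‖ := by gcongr; exact norm_sub_le_of_le le_rfl (norm_add_le _ _)

end IsResolventOf

section Measurability

variable {E : Type*} [NormedAddCommGroup E] [InnerProductSpace ℝ E]

lemma Orthonormal.countable [TopologicalSpace.SeparableSpace E] {ι : Type*} {v : ι → E}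
    (hv : Orthonormal ℝ v) : Countable ι := by
  refine Pairwise.countable_of_isOpen_disjoint (s := fun i => Metric.ball (v i) (1 / 2))
    (fun i j hij => Metric.ball_disjoint_ball ?_) (fun _ => Metric.isOpen_ball)
    (fun _ => Metric.nonempty_ball.mpr (by norm_num))
  -- orthonormal vectors are at distance `√2 ≥ 1`
  have hsq : dist (v i) (v j) ^ 2 = 2 := by
    rw [dist_eq_norm, norm_sub_sq_real, hv.norm_eq_one, hv.norm_eq_one, hv.inner_eq_zero hij]
    norm_num
  nlinarith [dist_nonneg (x := v i) (y := v j)]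

variable [CompleteSpace E] [TopologicalSpace.SeparableSpace E] [MeasurableSpace E] [BorelSpace E]

lemma measurable_of_forall_measurable_inner {Ω : Type*} [MeasurableSpace Ω] {f : Ω → E}
    (h : ∀ ξ : E, Measurable fun ω => inner ℝ (f ω) ξ) : Measurable f := by
  obtain ⟨w, b, -⟩ := exists_hilbertBasis ℝ E
  have : Countable w := b.orthonormal.countable
  refine measurable_of_tendsto_metrizable' (f := fun F ω => ∑ i ∈ F, b.repr (f ω) i • b i)
    Filter.atTop (fun F => Finset.measurable_sum _ fun i _ => ?_)
    (tendsto_pi_nhds.mpr fun ω => b.hasSum_repr (f ω))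
  simp_rw [b.repr_apply_apply, real_inner_comm _ (b i)]
  exact (h (b i)).smul_const _

lemma measurable_adjoint_apply {Ω H : Type*} [MeasurableSpace Ω] [NormedAddCommGroup H]
    [InnerProductSpace ℝ H] [CompleteSpace H] [SecondCountableTopology H] [MeasurableSpace H]
    [BorelSpace H] {L : Ω → E →L[ℝ] H} (hL : ∀ ξ : E, Measurable fun ω => L ω ξ) {f : Ω → H}
    (hf : Measurable f) : Measurable fun ω => (L ω).adjoint (f ω) :=
  measurable_of_forall_measurable_inner fun ξ => by
    simpa only [ContinuousLinearMap.adjoint_inner_left] using hf.inner (hL ξ)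

end Measurability

lemma integrable_of_lintegral_nnnorm_sq_lt_top {Ω H : Type*} [MeasurableSpace Ω] {μ : Measure Ω}
    [IsFiniteMeasure μ] [NormedAddCommGroup H] {y : Ω → H} (hy : AEStronglyMeasurable y μ)
    (h : (∫⁻ ω, (‖y ω‖₊ : ℝ≥0∞) ^ 2 ∂μ) < ⊤) : Integrable y μ := by
  have hy2 : MemLp y 2 μ := by
    refine ⟨hy, ?_⟩
    rw [eLpNorm_lt_top_iff_lintegral_rpow_enorm_lt_top two_ne_zero ENNReal.ofNat_ne_top]
    simpa [enorm_eq_nnnorm] using h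
  exact hy2.integrable one_le_two

lemma integrable_adjoint_resolvent_apply {Ω : Type*} [MeasurableSpace Ω] {μ : Measure Ω}
    [IsFiniteMeasure μ]
    {X : Type*} [NormedAddCommGroup X] [InnerProductSpace ℝ X] [CompleteSpace X]
    [SecondCountableTopology X] [MeasurableSpace X] [BorelSpace X]
    {H : Type*} [NormedAddCommGroup H] [InnerProductSpace ℝ H] [CompleteSpace H]
    [SecondCountableTopology H] [MeasurableSpace H] [BorelSpace H]
    {A : Ω → H → Set H} {J : Ω → H → H} (hA : ∀ ω, IsMonotoneOp (A ω))
    (hJ : ∀ ω, IsResolventOf (A ω) (J ω))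
    (hJmeas : ∀ x : Ω → H, Measurable x → Measurable fun ω => J ω (x ω))
    {x u : Ω → H} (hx : Integrable x μ) (hu : Integrable u μ) (hxu : ∀ᵐ ω ∂μ, u ω ∈ A ω (x ω))
    {L : Ω → X →L[ℝ] H} (hLmeas : ∀ ξ : X, Measurable fun ω => L ω ξ) (hL : ∀ ω, ‖L ω‖ ≤ 1)
    (ξ : X) : Integrable (fun ω => (L ω).adjoint (J ω (L ω ξ))) μ := by
  refine Integrable.mono' ((((integrable_const ‖ξ‖).add (hx.norm.add hu.norm)).add hx.norm))
    (measurable_adjoint_apply hLmeas (hJmeas _ (hLmeas ξ))).aestronglyMeasurable ?_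
  filter_upwards [hxu] with ω hω
  have hL' : ‖(L ω).adjoint‖ ≤ 1 := (ContinuousLinearMap.adjoint.norm_map (L ω)).trans_le (hL ω)
  calc ‖(L ω).adjoint (J ω (L ω ξ))‖ ≤ ‖J ω (L ω ξ)‖ :=
        ((L ω).adjoint.le_of_opNorm_le hL' _).trans_eq (one_mul _)
    _ ≤ ‖L ω ξ‖ + (‖x ω‖ + ‖u ω‖) + ‖x ω‖ := (hJ ω).norm_apply_le (hA ω) hω _
    _ ≤ ‖ξ‖ + (‖x ω‖ + ‖u ω‖) + ‖x ω‖ := by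
      gcongr; simpa using (L ω).le_of_opNorm_le (hL ω) ξ

theorem stmt_6_general
    {Ω : Type*} [MeasurableSpace Ω] {μ : Measure Ω}
    {X : Type*} [NormedAddCommGroup X] [InnerProductSpace ℝ X] [CompleteSpace X]
    [SecondCountableTopology X] [MeasurableSpace X] [BorelSpace X]
    {H : Type*} [NormedAddCommGroup H] [InnerProductSpace ℝ H] [CompleteSpace H]
    [SecondCountableTopology H] [MeasurableSpace H] [BorelSpace H]
    -- the family of maximally monotone operators, with its resolvents `JA ω = J_{A_ω}`
    -- and the resolvents `JAinv ω = J_{A_ω⁻¹}` of the inverses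
    (A : Ω → H → Set H) (JA JAinv : Ω → H → H)
    (hAmax : ∀ ω, IsMaxMonotone (A ω))
    (hJA : ∀ ω, IsResolventOf (A ω) (JA ω))
    (hJAinv : ∀ ω, IsResolventOf (graphInv (A ω)) (JAinv ω))
    (hJAmeas : ∀ x : Ω → H, Measurable x → Measurable fun ω => JA ω (x ω))
    (hdom : ∃ x xs : Ω → H, Measurable x ∧ Measurable xs ∧
      (∫⁻ ω, (‖x ω‖₊ : ℝ≥0∞) ^ 2 ∂μ) < ⊤ ∧ (∫⁻ ω, (‖xs ω‖₊ : ℝ≥0∞) ^ 2 ∂μ) < ⊤ ∧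
      ∀ᵐ ω ∂μ, xs ω ∈ A ω (x ω))
    -- the family of bounded linear operators
    (L : Ω → X →L[ℝ] H)
    (hLmeas : ∀ ξ : X, Measurable fun ω => L ω ξ)
    [IsProbabilityMeasure μ]
    (hLiso : ∀ ω (ξ : X), ‖L ω ξ‖ = ‖ξ‖) :
    rmiOp (fun ξ : X => ∫ ω, (L ω).adjoint (JA ω (L ω ξ)) ∂μ)
      = graphInv (rmiOp fun ξ : X => ∫ ω, (L ω).adjoint (JAinv ω (L ω ξ)) ∂μ) := by
  obtain ⟨x, xs, hxm, hxsm, hx2, hxs2, hmem⟩ := hdom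
  have hint : ∀ ξ, Integrable (fun ω => (L ω).adjoint (JA ω (L ω ξ))) μ :=
    integrable_adjoint_resolvent_apply (fun ω => (hAmax ω).1) hJA hJAmeas
      (integrable_of_lintegral_nnnorm_sq_lt_top hxm.aestronglyMeasurable hx2)
      (integrable_of_lintegral_nnnorm_sq_lt_top hxsm.aestronglyMeasurable hxs2) hmem hLmeas
      fun ω => (L ω).opNorm_le_bound zero_le_one fun ξ => by rw [hLiso, one_mul]
  have hLL : ∀ ω ξ, (L ω).adjoint (L ω ξ) = ξ := fun ω =>
    ContinuousLinearMap.ext_iff.mp ((L ω).norm_map_iff_adjoint_comp_self.mp (hLiso ω))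
  have hcomix : (fun ξ => ∫ ω, (L ω).adjoint (JAinv ω (L ω ξ)) ∂μ)
      = fun ξ => ξ - ∫ ω, (L ω).adjoint (JA ω (L ω ξ)) ∂μ := by
    funext ξ
    simp_rw [(hJA _).graphInv_apply (hJAinv _), map_sub, hLL]
    rw [integral_sub (integrable_const ξ) (hint ξ), integral_const, probReal_univ, one_smul]
  rw [hcomix, rmiOp_eq_graphInv_rmiOp_sub]

/-- Theorem 3.5(iv): if `μ` is a probability measure and every `L_ω` is an
isometry, then the integral resolvent mixture and comixture coincide:
`rmi(L_ω, A_ω) = rcm(L_ω, A_ω)`. -/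
theorem stmt_6
    {Ω : Type*} [MeasurableSpace Ω] {μ : Measure Ω} [SigmaFinite μ] [μ.IsComplete]
    {X : Type*} [NormedAddCommGroup X] [InnerProductSpace ℝ X] [CompleteSpace X]
    [SecondCountableTopology X] [MeasurableSpace X] [BorelSpace X]
    {H : Type*} [NormedAddCommGroup H] [InnerProductSpace ℝ H] [CompleteSpace H]
    [SecondCountableTopology H] [MeasurableSpace H] [BorelSpace H]
    -- the family of maximally monotone operators, with its resolvents `JA ω = J_{A_ω}`
    -- and the resolvents `JAinv ω = J_{A_ω⁻¹}` of the inverses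
    (A : Ω → H → Set H) (JA JAinv : Ω → H → H)
    (hAmax : ∀ ω, IsMaxMonotone (A ω))
    (hJA : ∀ ω, IsResolventOf (A ω) (JA ω))
    (hJAinv : ∀ ω, IsResolventOf (graphInv (A ω)) (JAinv ω))
    (hJAmeas : ∀ x : Ω → H, Measurable x → Measurable fun ω => JA ω (x ω))
    (hdom : ∃ x xs : Ω → H, Measurable x ∧ Measurable xs ∧
      (∫⁻ ω, (‖x ω‖₊ : ℝ≥0∞) ^ 2 ∂μ) < ⊤ ∧ (∫⁻ ω, (‖xs ω‖₊ : ℝ≥0∞) ^ 2 ∂μ) < ⊤ ∧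
      ∀ᵐ ω ∂μ, xs ω ∈ A ω (x ω))
    -- the family of bounded linear operators
    (L : Ω → X →L[ℝ] H)
    (hLmeas : ∀ ξ : X, Measurable fun ω => L ω ξ)
    (hLint : Integrable (fun ω => ‖L ω‖ ^ 2) μ)
    (hL0 : 0 < ∫ ω, ‖L ω‖ ^ 2 ∂μ) (hL1 : (∫ ω, ‖L ω‖ ^ 2 ∂μ) ≤ 1)
    [IsProbabilityMeasure μ]
    (hLiso : ∀ ω (ξ : X), ‖L ω ξ‖ = ‖ξ‖) :
    rmiOp (fun ξ : X => ∫ ω, (L ω).adjoint (JA ω (L ω ξ)) ∂μ)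
      = graphInv (rmiOp fun ξ : X => ∫ ω, (L ω).adjoint (JAinv ω (L ω ξ)) ∂μ) :=
  stmt_6_general A JA JAinv hAmax hJA hJAinv hJAmeas hdom L hLmeas hLiso
end
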